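/- arXiv:0810.0082 — 2 statements merged into one kernel-verified Lean document; each statement's English description precedes it below -/
import Mathlib

section
/- Let ω₀ ∈ L¹(ℝ²) ∩ L∞(ℝ²) and z₀ ∈ ℝ². If (ω, z, φ) is a global Lagrangian solution of the vortex-wave system with initial condition (ω₀, z₀), then (ω, z) is a global Eulerian solution of the vortex-wave system with initial condition (ω₀, z₀). -/
open MeasureTheory Metric Set
open scoped ENNReal RealInnerProductSpace

noncomputable section

/-- the plane ℝ² -/
abbrev E2 := EuclideanSpace ℝ (Fin 2)

/-- rotation by π/2 : (x₁,x₂)⊥ = (−x₂,x₁) -/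
def perp (x : E2) : E2 := (EuclideanSpace.equiv (Fin 2) ℝ).symm ![-(x 1), x 0]

/-- the Biot–Savart kernel K(x) = (1/2π) x⊥/|x|², extended by 0 at the origin -/
def biotSavart (x : E2) : E2 := (1 / (2 * Real.pi * ‖x‖ ^ 2)) • perp x

/-- the convolution K ∗ ω -/
def KConv (ω : E2 → ℝ) (x : E2) : E2 := ∫ y, ω y • biotSavart (x - y)

/-- the almost-Lipschitz modulus φ(z) = z(1 − ln z) for z < 1, φ(z) = 1 for z ≥ 1 -/
def phiLog (z : ℝ) : ℝ := if z < 1 then z * (1 - Real.log z) else 1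

/-- A global Eulerian solution of the vortex-wave system with initial condition `(ω₀, z₀)`:
`ω ∈ L∞(ℝ⁺, L¹ ∩ L∞)`, `z` continuous, the vorticity equation holds in the sense of
distributions with velocity `v + H`, `v = K ∗ ω`, `H(t,x) = K(x − z(t))`, and
`z(t) = z₀ + ∫₀ᵗ v(s, z(s)) ds`. -/
structure IsEulerianSolution (ω₀ : E2 → ℝ) (z₀ : E2) (ω : ℝ → E2 → ℝ) (z : ℝ → E2) : Prop where
  meas : AEStronglyMeasurable (Function.uncurry ω) ((volume : Measure ℝ).prod (volume : Measure E2))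
  bound : ∃ M : ℝ≥0∞, ∀ t : ℝ, 0 ≤ t →
    eLpNorm (ω t) 1 volume ≤ M ∧ eLpNorm (ω t) ⊤ volume ≤ M
  contz : ContinuousOn z (Ici 0)
  weak : ∀ ψ : ℝ × E2 → ℝ, ContDiff ℝ (⊤ : ℕ∞) ψ → HasCompactSupport ψ →
    -(∫ x, ω₀ x * ψ (0, x)) =
      ∫ t in Ioi (0:ℝ), ∫ x, ω t x *
        (fderiv ℝ ψ (t, x) (1, 0) +
          fderiv ℝ ψ (t, x) (0, KConv (ω t) x + biotSavart (x - z t)))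
  traj : ∀ t : ℝ, 0 ≤ t → z t = z₀ + ∫ s in Ioc (0:ℝ) t, KConv (ω s) (z s)

/-- A global Lagrangian solution of the vortex-wave system with initial condition `(ω₀, z₀)`:
`ω ∈ L∞(ℝ⁺, L¹ ∩ L∞)`, `v = K ∗ ω` continuous on `ℝ⁺ × ℝ²`, `z ∈ C¹(ℝ⁺)` with
`ż = v(t, z(t))`, `z(0) = z₀`; for every `x ≠ z₀` the flow trajectory `t ↦ φ_t(x)` is `C¹` with
`φ̇_t(x) = v(t, φ_t(x)) + K(φ_t(x) − z(t))`, `φ₀(x) = x`, the vorticity is transported,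
and each `φ_t` is a measure-preserving homeomorphism of `ℝ² ∖ {z₀}` onto `ℝ² ∖ {z(t)}`. -/
structure IsLagrangianSolution (ω₀ : E2 → ℝ) (z₀ : E2) (ω : ℝ → E2 → ℝ) (z : ℝ → E2)
    (φ : ℝ → E2 → E2) : Prop where
  meas : AEStronglyMeasurable (Function.uncurry ω) ((volume : Measure ℝ).prod (volume : Measure E2))
  bound : ∃ M : ℝ≥0∞, ∀ t : ℝ, 0 ≤ t →
    eLpNorm (ω t) 1 volume ≤ M ∧ eLpNorm (ω t) ⊤ volume ≤ M
  contv : ContinuousOn (fun p : ℝ × E2 => KConv (ω p.1) p.2) (Ici 0 ×ˢ univ)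
  zderiv : ∀ t : ℝ, 0 ≤ t → HasDerivWithinAt z (KConv (ω t) (z t)) (Ici 0) t
  zinit : z 0 = z₀
  flowderiv : ∀ x : E2, x ≠ z₀ → ∀ t : ℝ, 0 ≤ t →
    HasDerivWithinAt (fun s => φ s x)
      (KConv (ω t) (φ t x) + biotSavart (φ t x - z t)) (Ici 0) t
  flowinit : ∀ x : E2, x ≠ z₀ → φ 0 x = x
  transport : ∀ t : ℝ, 0 ≤ t → ∀ x : E2, x ≠ z₀ → ω t (φ t x) = ω₀ x
  homeo : ∀ t : ℝ, 0 ≤ t →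
    Set.BijOn (φ t) ({z₀}ᶜ) ({z t}ᶜ) ∧ ContinuousOn (φ t) ({z₀}ᶜ) ∧
      ContinuousOn (Function.invFunOn (φ t) ({z₀}ᶜ)) ({z t}ᶜ)
  measpres : ∀ t : ℝ, 0 ≤ t → ∀ s : Set E2, MeasurableSet s →
    volume (φ t '' (s \ {z₀})) = volume s


/-! ### Auxiliary lemmas -/

lemma norm_perp (x : E2) : ‖perp x‖ = ‖x‖ := by
  rw [EuclideanSpace.norm_eq, EuclideanSpace.norm_eq]
  simp [perp, Fin.sum_univ_two]
  ring_nf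

lemma continuous_perp : Continuous perp := by
  apply (EuclideanSpace.equiv (Fin 2) ℝ).symm.continuous.comp
  refine continuous_pi fun i => ?_
  fin_cases i
  · exact (PiLp.continuous_apply 2 (fun _ : Fin 2 => ℝ) 1).neg
  · simpa using PiLp.continuous_apply 2 (fun _ : Fin 2 => ℝ) 0

lemma perp_zero : perp (0 : E2) = 0 := by
  ext i
  fin_cases i <;> simp [perp]

lemma biotSavart_zero : biotSavart (0 : E2) = 0 := by simp [biotSavart, perp_zero]

lemma norm_biotSavart_le (x : E2) : ‖biotSavart x‖ ≤ (2 * Real.pi * ‖x‖)⁻¹ := by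
  rcases eq_or_ne x 0 with rfl | hx
  · simp [biotSavart_zero]
  · have hx' : 0 < ‖x‖ := norm_pos_iff.mpr hx
    rw [biotSavart, norm_smul, norm_perp]
    rw [Real.norm_eq_abs, abs_of_nonneg (by positivity)]
    rw [div_eq_mul_inv, one_mul]
    rw [show (2 * Real.pi * ‖x‖ ^ 2) = (2 * Real.pi * ‖x‖) * ‖x‖ by ring]
    rw [mul_inv, mul_assoc, inv_mul_cancel₀ hx'.ne', mul_one]

lemma continuousOn_biotSavart : ContinuousOn biotSavart ({0}ᶜ : Set E2) := by
  intro x hx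
  have hx' : (0:ℝ) < ‖x‖ := norm_pos_iff.mpr hx
  refine ContinuousWithinAt.smul (f := fun x : E2 => 1 / (2 * Real.pi * ‖x‖ ^ 2)) (g := perp) ?_ ?_
  · apply ContinuousWithinAt.div continuousWithinAt_const
    · exact (continuous_const.mul ((continuous_norm).pow 2)).continuousWithinAt
    · positivity
  · exact continuous_perp.continuousWithinAt

lemma measurable_biotSavart : Measurable biotSavart := by
  refine Measurable.smul (f := fun x : E2 => 1 / (2 * Real.pi * ‖x‖ ^ 2)) (g := perp) ?_ ?_
  · exact (measurable_const.div ((measurable_const.mul (measurable_norm.pow measurable_const))))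
  · exact continuous_perp.measurable

lemma lintegral_inv_norm_ball_lt_top (R : ℝ) :
    ∫⁻ y in ball (0:E2) R, ENNReal.ofReal ‖y‖⁻¹ < ⊤ := by
  have hmble : AEMeasurable (fun y : E2 => ‖y‖⁻¹) (volume.restrict (ball (0:E2) R)) :=
    (measurable_norm.inv).aemeasurable
  have hnn : 0 ≤ᵐ[volume.restrict (ball (0:E2) R)] fun y : E2 => ‖y‖⁻¹ :=
    Filter.Eventually.of_forall fun y => by positivity
  rw [lintegral_eq_lintegral_meas_lt _ hnn hmble]
  have hb1 : ∀ t : ℝ, (volume.restrict (ball (0:E2) R)) {a | t < ‖a‖⁻¹} ≤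
      volume (ball (0:E2) R) := fun t => by
    calc (volume.restrict (ball (0:E2) R)) {a | t < ‖a‖⁻¹}
        ≤ (volume.restrict (ball (0:E2) R)) univ := measure_mono (subset_univ _)
      _ = volume (ball (0:E2) R) := by simp
  have hb2 : ∀ t : ℝ, 0 < t → (volume.restrict (ball (0:E2) R)) {a | t < ‖a‖⁻¹} ≤
      ENNReal.ofReal ((t⁻¹) ^ 2) * volume (ball (0:E2) 1) := by
    intro t ht
    refine le_trans (Measure.restrict_apply_le _ _) ?_
    have hsub : {a : E2 | t < ‖a‖⁻¹} ⊆ closedBall 0 t⁻¹ := by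
      intro a ha
      simp only [mem_setOf_eq] at ha
      rcases eq_or_ne a 0 with rfl | h0
      · simpa using (inv_nonneg.mpr ht.le)
      · have hna : 0 < ‖a‖ := norm_pos_iff.mpr h0
        have := (lt_inv_comm₀ ht hna).mp ha
        simpa [mem_closedBall, dist_zero_right] using this.le
    calc volume {a : E2 | t < ‖a‖⁻¹} ≤ volume (closedBall (0:E2) t⁻¹) := measure_mono hsub
      _ = ENNReal.ofReal ((t⁻¹) ^ Module.finrank ℝ E2) * volume (ball (0:E2) 1) :=
          Measure.addHaar_closedBall _ _ (by positivity)
      _ = ENNReal.ofReal ((t⁻¹) ^ 2) * volume (ball (0:E2) 1) := by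
          rw [finrank_euclideanSpace_fin]
  have hsplit : (Ioi (0:ℝ)) = Ioc (0:ℝ) 1 ∪ Ioi (1:ℝ) := (Ioc_union_Ioi_eq_Ioi one_pos.le).symm
  rw [hsplit, lintegral_union measurableSet_Ioi Ioc_disjoint_Ioi_same]
  have h1 : ∫⁻ t in Ioc (0:ℝ) 1, (volume.restrict (ball (0:E2) R)) {a | t < ‖a‖⁻¹} < ⊤ := by
    calc ∫⁻ t in Ioc (0:ℝ) 1, (volume.restrict (ball (0:E2) R)) {a | t < ‖a‖⁻¹}
        ≤ ∫⁻ _ in Ioc (0:ℝ) 1, volume (ball (0:E2) R) := lintegral_mono fun t => hb1 t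
      _ = volume (ball (0:E2) R) * volume (Ioc (0:ℝ) 1) := by rw [setLIntegral_const]
      _ < ⊤ := ENNReal.mul_lt_top measure_ball_lt_top (by simp)
  have h2 : ∫⁻ t in Ioi (1:ℝ), (volume.restrict (ball (0:E2) R)) {a | t < ‖a‖⁻¹} < ⊤ := by
    have hint : IntegrableOn (fun t : ℝ => t ^ (-2 : ℝ)) (Ioi (1:ℝ)) volume :=
      integrableOn_Ioi_rpow_of_lt (by norm_num) one_pos
    have hlt : ∫⁻ t in Ioi (1:ℝ), ENNReal.ofReal (t ^ (-2:ℝ)) < ⊤ := hint.lintegral_lt_top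
    calc ∫⁻ t in Ioi (1:ℝ), (volume.restrict (ball (0:E2) R)) {a | t < ‖a‖⁻¹}
        ≤ ∫⁻ t in Ioi (1:ℝ), ENNReal.ofReal ((t⁻¹) ^ 2) * volume (ball (0:E2) 1) :=
          setLIntegral_mono' measurableSet_Ioi fun t ht => hb2 t (lt_trans one_pos ht)
      _ = (∫⁻ t in Ioi (1:ℝ), ENNReal.ofReal ((t⁻¹) ^ 2)) * volume (ball (0:E2) 1) := by
          rw [lintegral_mul_const'] ; exact measure_ball_lt_top.ne
      _ < ⊤ := by
          refine ENNReal.mul_lt_top ?_ measure_ball_lt_top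
          have heq : ∀ t ∈ Ioi (1:ℝ), ENNReal.ofReal ((t⁻¹) ^ 2) = ENNReal.ofReal (t ^ (-2:ℝ)) := by
            intro t ht
            have ht0 : (0:ℝ) < t := lt_trans one_pos ht
            congr 1
            rw [Real.rpow_neg ht0.le, inv_pow, ← Real.rpow_natCast t 2]
            norm_num
          rwa [setLIntegral_congr_fun measurableSet_Ioi heq]
  exact ENNReal.add_lt_top.mpr ⟨h1, h2⟩

lemma volume_compl_singleton_ae (a : E2) : ∀ᵐ x : E2 ∂volume, x ∈ ({a}ᶜ : Set E2) := by
  rw [ae_iff]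
  have h : {x : E2 | ¬ x ∈ ({a}ᶜ : Set E2)} = {a} := by ext x; simp
  rw [h]; exact measure_singleton a

lemma aux_aemeasurable {f : E2 → E2} {a : E2} (hc : ContinuousOn f ({a}ᶜ)) :
    AEMeasurable f (volume : Measure E2) := by
  have h := hc.aemeasurable (μ := (volume : Measure E2)) (measurableSet_singleton a).compl
  rwa [Measure.restrict_eq_self_of_ae_mem (volume_compl_singleton_ae a)] at h

lemma aux_preimage_meas {f : E2 → E2} {a : E2} (hc : ContinuousOn f ({a}ᶜ))
    {A : Set E2} (hA : MeasurableSet A) : MeasurableSet (f ⁻¹' A ∩ ({a}ᶜ : Set E2)) := by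
  have hso : MeasurableSet ({a}ᶜ : Set E2) := (measurableSet_singleton a).compl
  have hres : Measurable (({a}ᶜ : Set E2).restrict f) :=
    (continuousOn_iff_continuous_restrict.mp hc).measurable
  have h : f ⁻¹' A ∩ ({a}ᶜ : Set E2) =
      (fun x : ({a}ᶜ : Set E2) => (x : E2)) '' (({a}ᶜ : Set E2).restrict f ⁻¹' A) := by
    ext x
    constructor
    · rintro ⟨hxA, hxa⟩; exact ⟨⟨x, hxa⟩, hxA, rfl⟩
    · rintro ⟨⟨y, hy⟩, hyA, rfl⟩; exact ⟨hyA, hy⟩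
  rw [h]
  exact (MeasurableEmbedding.subtype_coe hso).measurableSet_image.2 (hres hA)

lemma aux_map_volume_eq {f : E2 → E2} {a b : E2}
    (hbij : Set.BijOn f ({a}ᶜ) ({b}ᶜ)) (hc : ContinuousOn f ({a}ᶜ))
    (hmp : ∀ s : Set E2, MeasurableSet s → volume (f '' (s \ {a})) = volume s) :
    Measure.map f volume = volume := by
  have haem : AEMeasurable f (volume : Measure E2) := aux_aemeasurable hc
  refine Measure.ext fun A hA => ?_
  rw [Measure.map_apply_of_aemeasurable haem hA]
  set s := f ⁻¹' A ∩ ({a}ᶜ : Set E2) with hs_def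
  have hs : MeasurableSet s := aux_preimage_meas hc hA
  have hca : (volume : Measure E2) (({a}ᶜ : Set E2)ᶜ) = 0 := by
    rw [compl_compl]; exact measure_singleton a
  have hcb : (volume : Measure E2) (({b}ᶜ : Set E2)ᶜ) = 0 := by
    rw [compl_compl]; exact measure_singleton b
  have h1 : volume (f ⁻¹' A) = volume s := (measure_inter_conull hca).symm
  have hsd : s \ {a} = s := by
    rw [diff_eq]; rw [hs_def, inter_assoc, inter_self]
  have h2 : f '' (s \ {a}) = A ∩ ({b}ᶜ : Set E2) := by
    rw [hsd]
    ext y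
    constructor
    · rintro ⟨x, ⟨hxA, hxa⟩, rfl⟩; exact ⟨hxA, hbij.mapsTo hxa⟩
    · rintro ⟨hyA, hyb⟩
      obtain ⟨x, hxa, rfl⟩ := hbij.surjOn hyb
      exact ⟨x, ⟨hyA, hxa⟩, rfl⟩
  rw [h1, ← hmp s hs, h2, measure_inter_conull hcb]

lemma aux_inv_bijOn {f : E2 → E2} {a b : E2} (hbij : Set.BijOn f ({a}ᶜ) ({b}ᶜ)) :
    Set.BijOn (Function.invFunOn f ({a}ᶜ)) ({b}ᶜ) ({a}ᶜ) ∧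
    (∀ y ∈ ({b}ᶜ : Set E2), f (Function.invFunOn f ({a}ᶜ) y) = y) ∧
    (∀ x ∈ ({a}ᶜ : Set E2), Function.invFunOn f ({a}ᶜ) (f x) = x) := by
  have hex : ∀ y ∈ ({b}ᶜ : Set E2), ∃ x ∈ ({a}ᶜ : Set E2), f x = y := by
    intro y hy
    obtain ⟨x, hx, hfx⟩ := hbij.surjOn hy
    exact ⟨x, hx, hfx⟩
  have hmem : ∀ y ∈ ({b}ᶜ : Set E2), Function.invFunOn f ({a}ᶜ) y ∈ ({a}ᶜ : Set E2) :=
    fun y hy => Function.invFunOn_mem (hex y hy)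
  have heq : ∀ y ∈ ({b}ᶜ : Set E2), f (Function.invFunOn f ({a}ᶜ) y) = y :=
    fun y hy => Function.invFunOn_eq (hex y hy)
  have hleft : ∀ x ∈ ({a}ᶜ : Set E2), Function.invFunOn f ({a}ᶜ) (f x) = x := by
    intro x hx
    have hfx : f x ∈ ({b}ᶜ : Set E2) := hbij.mapsTo hx
    exact hbij.injOn (hmem _ hfx) hx (heq _ hfx)
  refine ⟨⟨fun y hy => hmem y hy, ?_, ?_⟩, heq, hleft⟩
  · intro y1 hy1 y2 hy2 hinv
    rw [← heq y1 hy1, ← heq y2 hy2, hinv]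
  · intro x hx
    exact ⟨f x, hbij.mapsTo hx, hleft x hx⟩

lemma aux_inv_image {f : E2 → E2} {a b : E2} (hbij : Set.BijOn f ({a}ᶜ) ({b}ᶜ)) (B : Set E2)
    (hB : B ⊆ ({b}ᶜ : Set E2)) :
    Function.invFunOn f ({a}ᶜ) '' B = f ⁻¹' B ∩ ({a}ᶜ : Set E2) := by
  obtain ⟨hinvbij, heq, hleft⟩ := aux_inv_bijOn hbij
  ext x
  constructor
  · rintro ⟨y, hy, rfl⟩
    refine ⟨?_, hinvbij.mapsTo (hB hy)⟩
    show f (Function.invFunOn f ({a}ᶜ) y) ∈ B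
    rw [heq y (hB hy)]; exact hy
  · rintro ⟨hxB, hxa⟩
    exact ⟨f x, hxB, hleft x hxa⟩

lemma aux_map_volume_eq_inv {f : E2 → E2} {a b : E2}
    (hbij : Set.BijOn f ({a}ᶜ) ({b}ᶜ)) (hc : ContinuousOn f ({a}ᶜ))
    (hcinv : ContinuousOn (Function.invFunOn f ({a}ᶜ)) ({b}ᶜ))
    (hmp : ∀ s : Set E2, MeasurableSet s → volume (f '' (s \ {a})) = volume s) :
    Measure.map (Function.invFunOn f ({a}ᶜ)) volume = volume := by
  obtain ⟨hinvbij, heq, hleft⟩ := aux_inv_bijOn hbij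
  have hmapf := aux_map_volume_eq hbij hc hmp
  have haemf : AEMeasurable f (volume : Measure E2) := aux_aemeasurable hc
  refine aux_map_volume_eq hinvbij hcinv ?_
  intro s hsmeas
  have hsub : s \ {b} ⊆ ({b}ᶜ : Set E2) := fun x hx => hx.2
  rw [aux_inv_image hbij _ hsub]
  have hAB : MeasurableSet (s \ {b}) := hsmeas.diff (measurableSet_singleton b)
  have h1 : volume (f ⁻¹' (s \ {b}) ∩ ({a}ᶜ : Set E2)) = volume (f ⁻¹' (s \ {b})) :=
    measure_inter_conull (by rw [compl_compl]; exact measure_singleton a)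
  rw [h1, ← Measure.map_apply_of_aemeasurable haemf hAB, hmapf,
    measure_diff_null (measure_singleton b)]

set_option maxHeartbeats 4000000
set_option synthInstance.maxHeartbeats 1000000

/-- **Lagrangian implies Eulerian.** Every global Lagrangian solution of the vortex-wave system
with initial condition `(ω₀, z₀)` is a global Eulerian solution. -/
theorem lagrangian_implies_eulerian (ω₀ : E2 → ℝ) (z₀ : E2)
    (hω₀1 : MemLp ω₀ 1 (volume : Measure E2)) (hω₀top : MemLp ω₀ ⊤ (volume : Measure E2))
    (ω : ℝ → E2 → ℝ) (z : ℝ → E2) (φ : ℝ → E2 → E2)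
    (h : IsLagrangianSolution ω₀ z₀ ω z φ) :
    IsEulerianSolution ω₀ z₀ ω z := by
  have hzc : ContinuousOn z (Ici 0) := fun t ht => (h.zderiv t ht).continuousWithinAt
  have hpack : ∀ t : ℝ, 0 ≤ t →
      (Measure.map (φ t) volume = volume) ∧
      (Measure.map (Function.invFunOn (φ t) ({z₀}ᶜ)) volume = volume) ∧
      AEMeasurable (φ t) (volume : Measure E2) ∧
      AEMeasurable (Function.invFunOn (φ t) ({z₀}ᶜ)) (volume : Measure E2) := by
    intro t ht
    obtain ⟨hbij, hcφ, hcinv⟩ := h.homeo t ht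
    exact ⟨aux_map_volume_eq hbij hcφ (fun s hs => h.measpres t ht s hs),
      aux_map_volume_eq_inv hbij hcφ hcinv (fun s hs => h.measpres t ht s hs),
      aux_aemeasurable hcφ, aux_aemeasurable hcinv⟩
  have hωt_eq : ∀ t : ℝ, 0 ≤ t →
      ω t =ᵐ[(volume : Measure E2)] fun y => ω₀ (Function.invFunOn (φ t) ({z₀}ᶜ) y) := by
    intro t ht
    obtain ⟨hbij, hcφ, hcinv⟩ := h.homeo t ht
    obtain ⟨hinvbij, heq, hleft⟩ := aux_inv_bijOn hbij
    filter_upwards [volume_compl_singleton_ae (z t)] with y hy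
    have h1 : Function.invFunOn (φ t) ({z₀}ᶜ) y ∈ ({z₀}ᶜ : Set E2) := hinvbij.mapsTo hy
    calc ω t y = ω t (φ t (Function.invFunOn (φ t) ({z₀}ᶜ) y)) := by rw [heq y hy]
      _ = ω₀ (Function.invFunOn (φ t) ({z₀}ᶜ) y) := h.transport t ht _ h1
  have hωt_asm : ∀ t : ℝ, 0 ≤ t → AEStronglyMeasurable (ω t) (volume : Measure E2) := by
    intro t ht
    have h1 : AEStronglyMeasurable (ω₀ ∘ Function.invFunOn (φ t) ({z₀}ᶜ)) volume :=
      AEStronglyMeasurable.comp_aemeasurable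
        (by rw [(hpack t ht).2.1]; exact hω₀1.aestronglyMeasurable) (hpack t ht).2.2.2
    exact h1.congr (hωt_eq t ht).symm
  have hωt_top : ∀ t : ℝ, 0 ≤ t → eLpNorm (ω t) ⊤ volume = eLpNorm ω₀ ⊤ volume := by
    intro t ht
    rw [eLpNorm_congr_ae (hωt_eq t ht)]
    have h2 : (fun y => ω₀ (Function.invFunOn (φ t) ({z₀}ᶜ) y))
        = ω₀ ∘ Function.invFunOn (φ t) ({z₀}ᶜ) := rfl
    rw [h2, ← eLpNorm_map_measure (by rw [(hpack t ht).2.1]; exact hω₀1.aestronglyMeasurable)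
      (hpack t ht).2.2.2, (hpack t ht).2.1]
  refine ⟨h.meas, ⟨⊤, fun t ht => ⟨le_top, le_top⟩⟩, hzc, ?_, ?_⟩
  · -- weak formulation
    intro ψ hψ hψc
    classical
    set L := fderiv ℝ ψ with hL_def
    have hψdiff : Differentiable ℝ ψ := hψ.differentiable (by simp)
    have hLcont : Continuous L := hψ.continuous_fderiv (by simp)
    have hLcs : HasCompactSupport L := HasCompactSupport.fderiv ℝ hψc
    obtain ⟨Cψ, hCψ⟩ := hLcs.exists_bound_of_continuous hLcont
    have hCψ0 : 0 ≤ Cψ := le_trans (norm_nonneg _) (hCψ 0)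
    have hL0 : ∀ p : ℝ × E2, p ∉ tsupport ψ → L p = 0 := by
      intro p hp
      by_contra hne
      exact hp (support_fderiv_subset ℝ (Function.mem_support.mpr hne))
    obtain ⟨RT, hRT⟩ := hψc.isBounded.subset_closedBall 0
    set T := |RT| + 1 with hT_def
    set R := |RT| + 1 with hR_def
    have hTpos : 0 < T := by rw [hT_def]; positivity
    have hmem_bound : ∀ p : ℝ × E2, p ∈ tsupport ψ → |p.1| ≤ |RT| ∧ ‖p.2‖ ≤ |RT| := by
      intro p hp
      have h1 := hRT hp
      rw [mem_closedBall, dist_zero_right] at h1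
      have h2 : ‖p.1‖ ≤ ‖p‖ := norm_fst_le p
      have h3 : ‖p.2‖ ≤ ‖p‖ := norm_snd_le p
      have h4 : RT ≤ |RT| := le_abs_self RT
      constructor
      · rw [← Real.norm_eq_abs]; linarith
      · linarith
    have hψT : ∀ (t : ℝ) (x : E2), T ≤ t → ψ (t, x) = 0 := by
      intro t x hTt
      by_contra hne
      have hmem : (t, x) ∈ tsupport ψ := subset_tsupport ψ (Function.mem_support.mpr hne)
      have h1 := (hmem_bound _ hmem).1
      have h2 := le_abs_self t
      simp only at h1
      rw [hT_def] at hTt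
      linarith
    have hLT : ∀ (t : ℝ) (x : E2), T ≤ t → L (t, x) = 0 := by
      intro t x hTt
      by_contra hne
      have hmem : (t, x) ∈ tsupport ψ := by
        by_contra hmem
        exact hne (hL0 _ hmem)
      have h1 := (hmem_bound _ hmem).1
      have h2 := le_abs_self t
      simp only at h1
      rw [hT_def] at hTt
      linarith
    have hLR : ∀ (t : ℝ) (x : E2), L (t, x) ≠ 0 → ‖x‖ ≤ R := by
      intro t x hne
      have hmem : (t, x) ∈ tsupport ψ := by
        by_contra hmem
        exact hne (hL0 _ hmem)
      have h1 := (hmem_bound _ hmem).2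
      simp only at h1
      rw [hR_def]; linarith
    -- bound for KConv on the relevant compact set
    obtain ⟨Cv₀, hCv₀⟩ := (isCompact_Icc.prod (isCompact_closedBall (0:E2) R)).exists_bound_of_continuousOn
      (h.contv.mono (by rintro ⟨p1, p2⟩ hp; exact ⟨hp.1.1, mem_univ _⟩))
    set Cv := max Cv₀ 0 with hCv_def
    have hCv : ∀ p ∈ Icc (0:ℝ) T ×ˢ closedBall (0:E2) R, ‖KConv (ω p.1) p.2‖ ≤ Cv :=
      fun p hp => (hCv₀ p hp).trans (le_max_left _ _)
    have hCv0 : 0 ≤ Cv := le_max_right _ _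
    -- bound for z
    obtain ⟨Z₀, hZ₀⟩ := isCompact_Icc.exists_bound_of_continuousOn
      (hzc.mono (Icc_subset_Ici_self : Icc (0:ℝ) T ⊆ Ici 0))
    set Z := max Z₀ 0 with hZ_def
    have hZ : ∀ t ∈ Icc (0:ℝ) T, ‖z t‖ ≤ Z := fun t ht => (hZ₀ t ht).trans (le_max_left _ _)
    have hZ0 : 0 ≤ Z := le_max_right _ _
    -- notations
    set c : ℝ → E2 → ℝ := fun t y => L (t, y) (1, KConv (ω t) y + biotSavart (y - z t)) with hc_def
    set F : E2 → ℝ → ℝ := fun x t => ω₀ x * c t (φ t x) with hF_def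
    set ν : Measure ℝ := volume.restrict (Ioc 0 T) with hν_def
    have hν_fin : IsFiniteMeasure ν := by
      constructor
      rw [hν_def, Measure.restrict_apply_univ]
      exact measure_Ioc_lt_top
    have hν_univ_ne : ν univ ≠ ⊤ := by
      rw [hν_def, Measure.restrict_apply_univ]
      exact measure_Ioc_lt_top.ne
    -- basic continuity facts
    have hφcont : ∀ x, x ≠ z₀ → ContinuousOn (fun s => φ s x) (Ici 0) :=
      fun x hx t ht => (h.flowderiv x hx t ht).continuousWithinAt
    have hφ_ne : ∀ (t : ℝ), 0 ≤ t → ∀ x, x ≠ z₀ → φ t x ≠ z t := by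
      intro t ht x hx
      exact (h.homeo t ht).1.mapsTo hx
    have hKslice : ∀ t : ℝ, 0 ≤ t → Continuous (KConv (ω t)) := by
      intro t ht
      rw [← continuousOn_univ]
      exact h.contv.comp ((continuous_const.prodMk continuous_id).continuousOn)
        (fun y _ => ⟨ht, mem_univ _⟩)
    have hLapply : Continuous (fun q : (ℝ × E2) × (ℝ × E2) => L q.1 q.2) :=
      isBoundedBilinearMap_apply.continuous.comp ((hLcont.comp continuous_fst).prodMk continuous_snd)
    have hc_meas : ∀ t : ℝ, 0 ≤ t → Measurable (c t) := by
      intro t ht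
      have mv : Measurable fun y : E2 => KConv (ω t) y + biotSavart (y - z t) :=
        ((hKslice t ht).measurable).add
          (measurable_biotSavart.comp (measurable_id.sub measurable_const))
      exact hLapply.measurable.comp
        ((measurable_const.prodMk measurable_id).prodMk (measurable_const.prodMk mv))
    -- Step A : pointwise Lagrangian FTC
    have hkey : ∀ x, x ≠ z₀ → (∫ s in Ioc (0:ℝ) T, c s (φ s x)) = -ψ (0, x) := by
      intro x hx
      have hu_deriv : ∀ s, 0 ≤ s →
          HasDerivWithinAt (fun s' => ψ (s', φ s' x)) (c s (φ s x)) (Ici 0) s := by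
        intro s hs
        have hcurve : HasDerivWithinAt (fun s' => ((s' : ℝ), φ s' x))
            ((1 : ℝ), KConv (ω s) (φ s x) + biotSavart (φ s x - z s)) (Ici 0) s :=
          (hasDerivWithinAt_id s (Ici 0)).prodMk (h.flowderiv x hx s hs)
        exact (hψdiff (s, φ s x)).hasFDerivAt.comp_hasDerivWithinAt s hcurve
      have hγc : ContinuousOn (fun s => ((s:ℝ), φ s x)) (Icc 0 T) :=
        (continuous_id.continuousOn).prodMk ((hφcont x hx).mono Icc_subset_Ici_self)
      have hint : IntervalIntegrable (fun s => c s (φ s x)) volume 0 T := by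
        apply ContinuousOn.intervalIntegrable
        rw [uIcc_of_le hTpos.le]
        apply ContinuousOn.clm_apply (hLcont.comp_continuousOn hγc)
        apply ContinuousOn.prodMk continuousOn_const
        apply ContinuousOn.add
        · exact h.contv.comp hγc (fun s hs => ⟨hs.1, mem_univ _⟩)
        · apply continuousOn_biotSavart.comp
            (((hφcont x hx).mono Icc_subset_Ici_self).sub (hzc.mono Icc_subset_Ici_self))
          intro s hs
          exact mem_compl_singleton_iff.mpr (sub_ne_zero.mpr (hφ_ne s hs.1 x hx))
      have hFTC := intervalIntegral.integral_eq_sub_of_hasDeriv_right_of_le hTpos.le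
        (fun s hs => ((hu_deriv s hs.1).continuousWithinAt).mono Icc_subset_Ici_self)
        (fun s hs => (hu_deriv s hs.1.le).mono (fun u hu => le_trans hs.1.le (le_of_lt hu)))
        hint
      rw [intervalIntegral.integral_of_le hTpos.le] at hFTC
      rw [hFTC, hψT T (φ T x) le_rfl, h.flowinit x hx, zero_sub]
    -- Step B : joint measurability
    set Φ : ℝ → E2 → E2 := fun t x => if hx : x ∈ ({z₀} : Set E2) then z₀ else φ (max t 0) x
      with hΦ_def
    have hΦcont : ∀ x, Continuous fun t => Φ t x := by
      intro x
      by_cases hx : x ∈ ({z₀} : Set E2)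
      · simp only [hΦ_def, dif_pos hx]; exact continuous_const
      · simp only [hΦ_def, dif_neg hx]
        exact (hφcont x (by simpa using hx)).comp_continuous
          (continuous_id.max continuous_const) (fun t => le_max_right t 0)
    have hΦmeas_slice : ∀ t, Measurable (Φ t) := by
      intro t
      have hm : Measurable fun x : E2 =>
          if hx : x ∈ ({z₀} : Set E2) then z₀ else φ (max t 0) x := by
        apply Measurable.dite (s := ({z₀} : Set E2))
          (f := fun _ : ({z₀} : Set E2) => z₀)
          (g := fun x : ↥(({z₀} : Set E2)ᶜ) => φ (max t 0) (x : E2))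
        · exact measurable_const
        · have hcφ := (h.homeo (max t 0) (le_max_right t 0)).2.1
          exact (continuousOn_iff_continuous_restrict.mp hcφ).measurable
        · exact measurableSet_singleton z₀
      simpa only [hΦ_def] using hm
    have hΦunc : Measurable (Function.uncurry Φ) :=
      measurable_uncurry_of_continuous_of_measurable hΦcont hΦmeas_slice
    have hΦeq : ∀ t : ℝ, 0 ≤ t → ∀ x, x ≠ z₀ → Φ t x = φ t x := by
      intro t ht x hx
      simp only [hΦ_def, max_eq_left ht]
      rw [dif_neg (by simpa using hx)]
    set W : ℝ → E2 → E2 := fun t x => KConv (ω (max t 0)) (Φ t x) with hW_def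
    have hWcont : ∀ x, Continuous fun t => W t x := by
      intro x
      have hmt : Continuous fun t : ℝ => (max t 0, Φ t x) :=
        (continuous_id.max continuous_const).prodMk (hΦcont x)
      exact h.contv.comp_continuous hmt (fun t => ⟨le_max_right t 0, mem_univ _⟩)
    have hWmeas : ∀ t, Measurable (W t) := fun t =>
      (hKslice (max t 0) (le_max_right t 0)).measurable.comp (hΦmeas_slice t)
    have hWunc : Measurable (Function.uncurry W) :=
      measurable_uncurry_of_continuous_of_measurable hWcont hWmeas
    set ω₀' := hω₀1.aestronglyMeasurable.mk ω₀ with hω₀'_def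
    have hω₀'meas : StronglyMeasurable ω₀' := hω₀1.aestronglyMeasurable.stronglyMeasurable_mk
    have hω₀'ae : ω₀ =ᵐ[(volume : Measure E2)] ω₀' := hω₀1.aestronglyMeasurable.ae_eq_mk
    have hzmax : Continuous fun t : ℝ => z (max t 0) :=
      hzc.comp_continuous (continuous_id.max continuous_const) (fun t => le_max_right t 0)
    set D : E2 × ℝ → ℝ := fun q => ω₀' q.1 *
      (L (q.2, Φ q.2 q.1)) (1, W q.2 q.1 + biotSavart (Φ q.2 q.1 - z (max q.2 0))) with hD_def
    have m1 : Measurable fun q : E2 × ℝ => Φ q.2 q.1 := hΦunc.comp measurable_swap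
    have m2 : Measurable fun q : E2 × ℝ => W q.2 q.1 := hWunc.comp measurable_swap
    have m3 : Measurable fun q : E2 × ℝ => z (max q.2 0) :=
      hzmax.measurable.comp measurable_snd
    have mb : Measurable fun q : E2 × ℝ => biotSavart (Φ q.2 q.1 - z (max q.2 0)) :=
      measurable_biotSavart.comp (m1.sub m3)
    have hDmeas : Measurable D := by
      apply Measurable.mul
      · exact hω₀'meas.measurable.comp measurable_fst
      · exact hLapply.measurable.comp
          ((measurable_snd.prodMk m1).prodMk (measurable_const.prodMk (m2.add mb)))
    -- a.e. identification of F with D on the product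
    have hgood : ∀ᵐ q ∂((volume : Measure E2).prod ν),
        q.1 ≠ z₀ ∧ ω₀ q.1 = ω₀' q.1 ∧ q.2 ∈ Ioc (0:ℝ) T := by
      have h1 : ∀ᵐ q ∂((volume : Measure E2).prod ν), q.1 ≠ z₀ := by
        rw [ae_iff]
        refine measure_mono_null (fun q hq => ?_) (?_ : ((volume : Measure E2).prod ν)
          (({z₀} : Set E2) ×ˢ (univ : Set ℝ)) = 0)
        · simp only [mem_setOf_eq, not_not] at hq
          exact ⟨hq, mem_univ _⟩
        · rw [Measure.prod_prod, measure_singleton, zero_mul]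
      have h2 : ∀ᵐ q ∂((volume : Measure E2).prod ν), ω₀ q.1 = ω₀' q.1 := by
        rw [ae_iff]
        refine measure_mono_null (fun q hq => ?_) (?_ : ((volume : Measure E2).prod ν)
          ({x : E2 | ω₀ x ≠ ω₀' x} ×ˢ (univ : Set ℝ)) = 0)
        · exact ⟨hq, mem_univ _⟩
        · rw [Measure.prod_prod]
          have : (volume : Measure E2) {x : E2 | ω₀ x ≠ ω₀' x} = 0 := hω₀'ae
          rw [this, zero_mul]
      have h3 : ∀ᵐ q ∂((volume : Measure E2).prod ν), q.2 ∈ Ioc (0:ℝ) T := by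
        rw [ae_iff]
        refine measure_mono_null (fun q hq => ?_) (?_ : ((volume : Measure E2).prod ν)
          ((univ : Set E2) ×ˢ (Ioc (0:ℝ) T)ᶜ) = 0)
        · exact ⟨mem_univ _, hq⟩
        · rw [Measure.prod_prod]
          have : ν (Ioc (0:ℝ) T)ᶜ = 0 := by
            rw [hν_def, Measure.restrict_apply measurableSet_Ioc.compl]
            simp
          rw [this, mul_zero]
      filter_upwards [h1, h2, h3] with q hq1 hq2 hq3
      exact ⟨hq1, hq2, hq3⟩
    have hFD_ae : (Function.uncurry F) =ᵐ[((volume : Measure E2).prod ν)] D := by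
      filter_upwards [hgood] with q hq
      obtain ⟨hq1, hq2, hq3⟩ := hq
      have hmax : max q.2 0 = q.2 := max_eq_left hq3.1.le
      have hΦq : Φ q.2 q.1 = φ q.2 q.1 := hΦeq q.2 hq3.1.le q.1 hq1
      show F q.1 q.2 = D q
      simp only [hF_def, hD_def, hW_def, hc_def, hΦq, hmax, hq2]
    -- Step C : integrability on the product
    have hCK := lintegral_inv_norm_ball_lt_top (R + Z + 1)
    set CK := ∫⁻ u in ball (0:E2) (R + Z + 1), ENNReal.ofReal ‖u‖⁻¹ with hCK_def
    have hω₀top_ne : eLpNorm ω₀ ⊤ volume ≠ ⊤ := hω₀top.2.ne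
    have hω₀1_ne : eLpNorm ω₀ 1 volume ≠ ⊤ := hω₀1.2.ne
    have hker : ∀ t ∈ Ioc (0:ℝ) T,
        (∫⁻ y, (‖L (t, y) ((0:ℝ), biotSavart (y - z t))‖₊ : ℝ≥0∞) ∂(volume : Measure E2))
          ≤ ENNReal.ofReal (Cψ * (2 * Real.pi)⁻¹) * CK := by
      intro t ht
      have hzt : ‖z t‖ ≤ Z := hZ t ⟨ht.1.le, ht.2⟩
      have hptwise : ∀ y : E2, (‖L (t, y) ((0:ℝ), biotSavart (y - z t))‖₊ : ℝ≥0∞)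
          ≤ ENNReal.ofReal (Cψ * (2 * Real.pi)⁻¹) *
            (ball (0:E2) (R + Z + 1)).indicator (fun u => ENNReal.ofReal ‖u‖⁻¹) (y - z t) := by
        intro y
        by_cases hLy : L (t, y) = 0
        · simp [hLy]
        · have hyR : ‖y‖ ≤ R := hLR t y hLy
          have hmem : y - z t ∈ ball (0:E2) (R + Z + 1) := by
            rw [mem_ball, dist_zero_right]
            have := norm_sub_le y (z t)
            linarith
          rw [indicator_of_mem hmem, ← enorm_eq_nnnorm, ← ofReal_norm,
            ← ENNReal.ofReal_mul (by positivity)]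
          apply ENNReal.ofReal_le_ofReal
          have h2 : ‖((0:ℝ), biotSavart (y - z t))‖ = ‖biotSavart (y - z t)‖ := by
            rw [Prod.norm_def]
            simp
          have h3 := norm_biotSavart_le (y - z t)
          calc ‖L (t, y) ((0:ℝ), biotSavart (y - z t))‖
              ≤ Cψ * ‖biotSavart (y - z t)‖ := by
                rw [← h2]
                exact le_trans ((L (t, y)).le_opNorm _)
                  (mul_le_mul_of_nonneg_right (hCψ _) (norm_nonneg _))
            _ ≤ Cψ * (2 * Real.pi * ‖y - z t‖)⁻¹ := mul_le_mul_of_nonneg_left h3 hCψ0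
            _ = Cψ * (2 * Real.pi)⁻¹ * ‖y - z t‖⁻¹ := by rw [mul_inv]; ring
      calc (∫⁻ y, (‖L (t, y) ((0:ℝ), biotSavart (y - z t))‖₊ : ℝ≥0∞) ∂(volume : Measure E2))
          ≤ ∫⁻ y, ENNReal.ofReal (Cψ * (2 * Real.pi)⁻¹) *
              (ball (0:E2) (R + Z + 1)).indicator (fun u => ENNReal.ofReal ‖u‖⁻¹) (y - z t)
                ∂(volume : Measure E2) := lintegral_mono hptwise
        _ = ENNReal.ofReal (Cψ * (2 * Real.pi)⁻¹) * ∫⁻ y,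
              (ball (0:E2) (R + Z + 1)).indicator (fun u => ENNReal.ofReal ‖u‖⁻¹) (y - z t)
                ∂(volume : Measure E2) := lintegral_const_mul' _ _ ENNReal.ofReal_ne_top
        _ = ENNReal.ofReal (Cψ * (2 * Real.pi)⁻¹) * CK := by
            congr 1
            have heq : (fun y : E2 => (ball (0:E2) (R + Z + 1)).indicator
                (fun u => ENNReal.ofReal ‖u‖⁻¹) (y - z t))
                = fun y : E2 => (ball (0:E2) (R + Z + 1)).indicator
                  (fun u => ENNReal.ofReal ‖u‖⁻¹) (y + (- z t)) := by
              funext y; rw [sub_eq_add_neg]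
            rw [heq, lintegral_add_right_eq_self
              ((ball (0:E2) (R + Z + 1)).indicator (fun u => ENNReal.ofReal ‖u‖⁻¹)) (- z t),
              hCK_def, lintegral_indicator measurableSet_ball]
    -- bound for the regular part
    have hbound1 : ∀ t ∈ Ioc (0:ℝ) T, ∀ y : E2,
        ‖L (t, y) ((1:ℝ), KConv (ω t) y)‖ ≤ Cψ * (1 + Cv) := by
      intro t ht y
      by_cases hLy : L (t, y) = 0
      · rw [hLy]; simp; positivity
      · have hyR : ‖y‖ ≤ R := hLR t y hLy
        have hv : ‖KConv (ω t) y‖ ≤ Cv := hCv (t, y)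
          ⟨⟨ht.1.le, ht.2⟩, by simpa [mem_closedBall, dist_zero_right] using hyR⟩
        calc ‖L (t, y) ((1:ℝ), KConv (ω t) y)‖ ≤ Cψ * ‖((1:ℝ), KConv (ω t) y)‖ :=
              le_trans ((L (t, y)).le_opNorm _)
                (mul_le_mul_of_nonneg_right (hCψ _) (norm_nonneg _))
          _ ≤ Cψ * (1 + Cv) := by
              apply mul_le_mul_of_nonneg_left _ hCψ0
              rw [Prod.norm_def]
              apply max_le
              · simp; linarith
              · simp; linarith
    have hsplit_c : ∀ (t : ℝ) (y : E2), c t y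
        = L (t, y) ((1:ℝ), KConv (ω t) y) + L (t, y) ((0:ℝ), biotSavart (y - z t)) := by
      intro t y
      rw [hc_def, ← ContinuousLinearMap.map_add, Prod.mk_add_mk, add_zero]
    -- the two dominating functions
    set G1 : E2 × ℝ → ℝ≥0∞ := fun q => (‖ω₀' q.1‖₊ : ℝ≥0∞) * ENNReal.ofReal (Cψ * (1 + Cv))
      with hG1_def
    set G2 : E2 × ℝ → ℝ≥0∞ := fun q => (‖ω₀' q.1‖₊ : ℝ≥0∞) *
      ‖L (q.2, Φ q.2 q.1) ((0:ℝ), biotSavart (Φ q.2 q.1 - z (max q.2 0)))‖₊ with hG2_def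
    have hG1meas : Measurable G1 :=
      ((hω₀'meas.measurable.comp measurable_fst).enorm).mul_const _
    have hG2meas : Measurable G2 := by
      refine Measurable.mul (f := fun q : E2 × ℝ => (‖ω₀' q.1‖₊ : ℝ≥0∞))
        (g := fun q : E2 × ℝ => (‖L (q.2, Φ q.2 q.1) ((0:ℝ),
          biotSavart (Φ q.2 q.1 - z (max q.2 0)))‖₊ : ℝ≥0∞)) ?_ ?_
      · exact (hω₀'meas.measurable.comp measurable_fst).enorm
      · exact (hLapply.measurable.comp ((measurable_snd.prodMk m1).prodMk
          (measurable_const.prodMk mb))).enorm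
    have hFbound : ∀ᵐ q ∂((volume : Measure E2).prod ν),
        ENNReal.ofReal ‖Function.uncurry F q‖ ≤ G1 q + G2 q := by
      filter_upwards [hgood] with q hq
      obtain ⟨hq1, hq2, hq3⟩ := hq
      have hmax : max q.2 0 = q.2 := max_eq_left hq3.1.le
      have hΦq : Φ q.2 q.1 = φ q.2 q.1 := hΦeq q.2 hq3.1.le q.1 hq1
      have habs : ‖Function.uncurry F q‖ ≤ |ω₀' q.1| * (Cψ * (1 + Cv))
          + |ω₀' q.1| * ‖L (q.2, φ q.2 q.1) ((0:ℝ), biotSavart (φ q.2 q.1 - z q.2))‖ := by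
        show ‖F q.1 q.2‖ ≤ _
        rw [hF_def]
        simp only
        rw [hsplit_c q.2 (φ q.2 q.1)]
        rw [norm_mul, Real.norm_eq_abs (ω₀ q.1), hq2, ← mul_add]
        apply mul_le_mul_of_nonneg_left _ (abs_nonneg _)
        exact le_trans (norm_add_le _ _)
          (add_le_add_left (hbound1 q.2 hq3 (φ q.2 q.1)) _)
      calc ENNReal.ofReal ‖Function.uncurry F q‖
          ≤ ENNReal.ofReal (|ω₀' q.1| * (Cψ * (1 + Cv))
            + |ω₀' q.1| * ‖L (q.2, φ q.2 q.1) ((0:ℝ), biotSavart (φ q.2 q.1 - z q.2))‖) :=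
            ENNReal.ofReal_le_ofReal habs
        _ ≤ G1 q + G2 q := by
            rw [ENNReal.ofReal_add (by positivity) (by positivity),
              ENNReal.ofReal_mul (abs_nonneg _), ENNReal.ofReal_mul (abs_nonneg _)]
            rw [hG1_def, hG2_def]
            simp only [hΦq, hmax]
            rw [← Real.norm_eq_abs (ω₀' q.1), ofReal_norm,
              ofReal_norm, enorm_eq_nnnorm, enorm_eq_nnnorm]
    have hG1fin : ∫⁻ q, G1 q ∂((volume : Measure E2).prod ν) < ⊤ := by
      have heq : ∫⁻ q, G1 q ∂((volume : Measure E2).prod ν)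
          = (∫⁻ x, (‖ω₀' x‖₊ : ℝ≥0∞) ∂(volume : Measure E2)) *
            ∫⁻ _, ENNReal.ofReal (Cψ * (1 + Cv)) ∂ν :=
        lintegral_prod_mul (hω₀'meas.measurable.enorm.aemeasurable) aemeasurable_const
      rw [heq]
      apply ENNReal.mul_lt_top
      · have : ∫⁻ x, (‖ω₀' x‖₊ : ℝ≥0∞) ∂(volume : Measure E2) = eLpNorm ω₀' 1 volume := by
          simp only [eLpNorm_one_eq_lintegral_enorm, enorm_eq_nnnorm]
        rw [this, ← eLpNorm_congr_ae hω₀'ae]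
        exact hω₀1.2
      · rw [lintegral_const]
        exact ENNReal.mul_lt_top ENNReal.ofReal_lt_top hν_univ_ne.lt_top
    have hG2fin : ∫⁻ q, G2 q ∂((volume : Measure E2).prod ν) < ⊤ := by
      rw [lintegral_prod_symm _ hG2meas.aemeasurable]
      have hinner_le : ∀ᵐ t ∂ν, (∫⁻ x, G2 (x, t) ∂(volume : Measure E2))
          ≤ eLpNorm ω₀ ⊤ volume * (ENNReal.ofReal (Cψ * (2 * Real.pi)⁻¹) * CK) := by
        rw [hν_def]
        filter_upwards [ae_restrict_mem measurableSet_Ioc] with t ht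
        have ht0 : (0:ℝ) ≤ t := ht.1.le
        have hmax : max t 0 = t := max_eq_left ht0
        set G : E2 → ℝ≥0∞ := fun y => (‖ω t y‖₊ : ℝ≥0∞) *
          ‖L (t, y) ((0:ℝ), biotSavart (y - z t))‖₊ with hG_def
        have hGaem : AEMeasurable G (volume : Measure E2) := by
          refine AEMeasurable.mul (f := fun y : E2 => (‖ω t y‖₊ : ℝ≥0∞))
            (g := fun y : E2 => (‖L (t, y) ((0:ℝ), biotSavart (y - z t))‖₊ : ℝ≥0∞)) ?_ ?_
          · exact (hωt_asm t ht0).enorm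
          · have : Measurable fun y : E2 =>
                L (t, y) ((0:ℝ), biotSavart (y - z t)) :=
              hLapply.measurable.comp ((measurable_const.prodMk measurable_id).prodMk
                (measurable_const.prodMk
                  (measurable_biotSavart.comp (measurable_id.sub measurable_const))))
            exact this.enorm.aemeasurable
        have hstep1 : (∫⁻ x, G2 (x, t) ∂(volume : Measure E2))
            = ∫⁻ x, G (φ t x) ∂(volume : Measure E2) := by
          apply lintegral_congr_ae
          filter_upwards [volume_compl_singleton_ae z₀, hω₀'ae] with x hx hx2
          have hΦq : Φ t x = φ t x := hΦeq t ht0 x hx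
          rw [hG2_def, hG_def]
          simp only [hΦq, hmax]
          rw [← hx2, h.transport t ht0 x hx]
        have hstep2 : (∫⁻ x, G (φ t x) ∂(volume : Measure E2))
            = ∫⁻ y, G y ∂(volume : Measure E2) := by
          conv_rhs => rw [← (hpack t ht0).1]
          exact (lintegral_map' (by rw [(hpack t ht0).1]; exact hGaem) (hpack t ht0).2.2.1).symm
        rw [hstep1, hstep2]
        have hae_bd : ∀ᵐ y ∂(volume : Measure E2), G y ≤ eLpNorm (ω t) ⊤ volume *
            (‖L (t, y) ((0:ℝ), biotSavart (y - z t))‖₊ : ℝ≥0∞) := by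
          have hb := ae_le_eLpNormEssSup (f := ω t) (μ := (volume : Measure E2))
          filter_upwards [hb] with y hy
          rw [hG_def]
          apply mul_le_mul_left
          rw [eLpNorm_exponent_top]
          exact hy
        calc ∫⁻ y, G y ∂(volume : Measure E2)
            ≤ ∫⁻ y, eLpNorm (ω t) ⊤ volume *
              (‖L (t, y) ((0:ℝ), biotSavart (y - z t))‖₊ : ℝ≥0∞) ∂(volume : Measure E2) :=
              lintegral_mono_ae hae_bd
          _ = eLpNorm (ω t) ⊤ volume * ∫⁻ y,
              (‖L (t, y) ((0:ℝ), biotSavart (y - z t))‖₊ : ℝ≥0∞) ∂(volume : Measure E2) :=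
              lintegral_const_mul' _ _ (by rw [hωt_top t ht0]; exact hω₀top_ne)
          _ ≤ eLpNorm (ω t) ⊤ volume * (ENNReal.ofReal (Cψ * (2 * Real.pi)⁻¹) * CK) :=
              mul_le_mul_right (hker t ht) _
          _ = eLpNorm ω₀ ⊤ volume * (ENNReal.ofReal (Cψ * (2 * Real.pi)⁻¹) * CK) := by
              rw [hωt_top t ht0]
      calc ∫⁻ t, (∫⁻ x, G2 (x, t) ∂(volume : Measure E2)) ∂ν
          ≤ ∫⁻ _, eLpNorm ω₀ ⊤ volume *
            (ENNReal.ofReal (Cψ * (2 * Real.pi)⁻¹) * CK) ∂ν := lintegral_mono_ae hinner_le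
        _ = eLpNorm ω₀ ⊤ volume * (ENNReal.ofReal (Cψ * (2 * Real.pi)⁻¹) * CK) * ν univ := by
            rw [lintegral_const]
        _ < ⊤ := by
            apply ENNReal.mul_lt_top _ hν_univ_ne.lt_top
            exact ENNReal.mul_lt_top hω₀top_ne.lt_top
              (ENNReal.mul_lt_top ENNReal.ofReal_lt_top hCK)
    have hFint : Integrable (Function.uncurry F) ((volume : Measure E2).prod ν) := by
      constructor
      · exact (hDmeas.aestronglyMeasurable).congr hFD_ae.symm
      · rw [hasFiniteIntegral_iff_norm]
        calc ∫⁻ q, ENNReal.ofReal ‖Function.uncurry F q‖ ∂((volume : Measure E2).prod ν)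
            ≤ ∫⁻ q, (G1 q + G2 q) ∂((volume : Measure E2).prod ν) := lintegral_mono_ae hFbound
          _ = (∫⁻ q, G1 q ∂((volume : Measure E2).prod ν))
              + ∫⁻ q, G2 q ∂((volume : Measure E2).prod ν) := lintegral_add_left hG1meas _
          _ < ⊤ := ENNReal.add_lt_top.mpr ⟨hG1fin, hG2fin⟩
    -- Step D : assembling
    have hinner : ∀ t ∈ Ioc (0:ℝ) T,
        (∫ x, ω t x * c t x ∂(volume : Measure E2)) = ∫ x, F x t ∂(volume : Measure E2) := by
      intro t ht
      have ht0 : (0:ℝ) ≤ t := ht.1.le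
      have hG_asm : AEStronglyMeasurable (fun y => ω t y * c t y) (volume : Measure E2) :=
        (hωt_asm t ht0).mul (hc_meas t ht0).aestronglyMeasurable
      calc (∫ x, ω t x * c t x ∂(volume : Measure E2))
          = ∫ y, (fun y => ω t y * c t y) y ∂(Measure.map (φ t) volume) := by
            rw [(hpack t ht0).1]
        _ = ∫ x, ω t (φ t x) * c t (φ t x) ∂(volume : Measure E2) :=
            integral_map (hpack t ht0).2.2.1 (by rw [(hpack t ht0).1]; exact hG_asm)
        _ = ∫ x, F x t ∂(volume : Measure E2) := by
            apply integral_congr_ae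
            filter_upwards [volume_compl_singleton_ae z₀] with x hx
            rw [hF_def]
            simp only
            rw [h.transport t ht0 x hx]
    have hmarg_int : Integrable (fun t => ∫ x, F x t ∂(volume : Measure E2)) ν :=
      hFint.swap.integral_prod_left
    have hIoc_int : IntegrableOn (fun t => ∫ x, ω t x * c t x ∂(volume : Measure E2))
        (Ioc (0:ℝ) T) volume := by
      have h1 : Integrable (fun t => ∫ x, F x t ∂(volume : Measure E2))
          (volume.restrict (Ioc (0:ℝ) T)) := by rw [← hν_def]; exact hmarg_int
      apply h1.congr
      filter_upwards [ae_restrict_mem measurableSet_Ioc] with t ht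
      exact (hinner t ht).symm
    have hIoiT_zero : ∀ t ∈ Ioi T, (∫ x, ω t x * c t x ∂(volume : Measure E2)) = 0 := by
      intro t ht
      have hzero : ∀ x : E2, ω t x * c t x = 0 := by
        intro x
        rw [hc_def]
        simp only
        rw [hLT t x (le_of_lt ht), ContinuousLinearMap.zero_apply, mul_zero]
      simp only [hzero, integral_zero]
    have hIoi_split : (∫ t in Ioi (0:ℝ), ∫ x, ω t x * c t x ∂(volume : Measure E2))
        = ∫ t in Ioc (0:ℝ) T, ∫ x, ω t x * c t x ∂(volume : Measure E2) := by
      rw [← Ioc_union_Ioi_eq_Ioi hTpos.le]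
      rw [setIntegral_union Ioc_disjoint_Ioi_same measurableSet_Ioi hIoc_int
        (((integrableOn_zero).congr_fun (fun t ht => (hIoiT_zero t ht).symm)
          measurableSet_Ioi))]
      rw [setIntegral_congr_fun measurableSet_Ioi (fun t ht => hIoiT_zero t ht)]
      simp
    have hgoal_inner : ∀ t : ℝ, (∫ x, ω t x * ((L (t, x)) ((1:ℝ), (0:E2))
        + (L (t, x)) ((0:ℝ), KConv (ω t) x + biotSavart (x - z t))) ∂(volume : Measure E2))
        = ∫ x, ω t x * c t x ∂(volume : Measure E2) := by
      intro t
      congr 1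
      funext x
      congr 1
      rw [hc_def]
      simp only
      rw [← ContinuousLinearMap.map_add, Prod.mk_add_mk, add_zero, zero_add]
    have hLHS : -(∫ x, ω₀ x * ψ (0, x)) = ∫ x, (∫ t, F x t ∂ν) ∂(volume : Measure E2) := by
      rw [← integral_neg]
      apply integral_congr_ae
      filter_upwards [volume_compl_singleton_ae z₀] with x hx
      have h2 : (∫ t, F x t ∂ν) = ∫ t in Ioc (0:ℝ) T, ω₀ x * c t (φ t x) := by
        rw [hν_def]
      rw [h2, integral_const_mul, hkey x hx]
      ring
    calc -(∫ x, ω₀ x * ψ (0, x))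
        = ∫ x, (∫ t, F x t ∂ν) ∂(volume : Measure E2) := hLHS
      _ = ∫ t, (∫ x, F x t ∂(volume : Measure E2)) ∂ν := integral_integral_swap hFint
      _ = ∫ t in Ioc (0:ℝ) T, (∫ x, ω t x * c t x ∂(volume : Measure E2)) := by
          rw [hν_def]
          exact setIntegral_congr_fun measurableSet_Ioc (fun t ht => (hinner t ht).symm)
      _ = ∫ t in Ioi (0:ℝ), ∫ x, ω t x * c t x ∂(volume : Measure E2) := hIoi_split.symm
      _ = ∫ t in Ioi (0:ℝ), ∫ x, ω t x * ((L (t, x)) ((1:ℝ), (0:E2))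
          + (L (t, x)) ((0:ℝ), KConv (ω t) x + biotSavart (x - z t)))
            ∂(volume : Measure E2) := by
          exact integral_congr_ae (Filter.Eventually.of_forall
            (fun t => (hgoal_inner t).symm))
  
  · -- trajectory
    intro t ht
    rcases eq_or_lt_of_le ht with rfl | ht0
    · simp [← h.zinit]
    · have hcontz : ContinuousOn z (Icc 0 t) := hzc.mono Icc_subset_Ici_self
      have hγ : ContinuousOn (fun s => ((s:ℝ), z s)) (Icc 0 t) :=
        (continuous_id.continuousOn).prodMk hcontz
      have hcd : ContinuousOn (fun s => KConv (ω s) (z s)) (Icc 0 t) :=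
        h.contv.comp hγ (fun s hs => ⟨hs.1, mem_univ _⟩)
      have hderiv : ∀ s ∈ Ioo 0 t, HasDerivWithinAt z (KConv (ω s) (z s)) (Ioi s) s :=
        fun s hs => (h.zderiv s hs.1.le).mono (fun u hu => le_trans hs.1.le (le_of_lt hu))
      have hint : IntervalIntegrable (fun s => KConv (ω s) (z s)) volume 0 t := by
        apply ContinuousOn.intervalIntegrable
        rwa [uIcc_of_le ht]
      have hFTC := intervalIntegral.integral_eq_sub_of_hasDeriv_right_of_le ht hcontz hderiv hint
      rw [intervalIntegral.integral_of_le ht] at hFTC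
      rw [hFTC, h.zinit]
      abel

end
end

section
/- Let ω ∈ L¹(ℝ²) ∩ L∞(ℝ²) be compactly supported with ∫_{ℝ²} ω(x) dx = 0. Then the velocity field K ∗ ω belongs to L²(ℝ²; ℝ²). -/
open MeasureTheory Metric Set
open scoped ENNReal RealInnerProductSpace

noncomputable section

/-!
Since `‖K z‖ = 1 / (2π‖z‖)` is integrable near the origin and bounded away from it, `K ∗ ω` is
bounded for `ω ∈ L¹ ∩ L∞`. If `supp ω ⊆ B(0, R)` and `‖x‖ ≥ 2R`, the mean-zero condition lets one
replace `K (x - y)` by `K (x - y) - K x`; as `K` is a rotation of the inversion `z ↦ z / ‖z‖²`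
scaled by `1 / 2π`, `‖K a - K b‖ = ‖a - b‖ / (2π‖a‖‖b‖)`, so `K ∗ ω (x) = O(‖x‖⁻²)`, which is
square-integrable at infinity in the plane.
-/

section Convolution

variable {G F : Type*} [MeasurableSpace G] [AddGroup G] [NormedAddCommGroup F] [NormedSpace ℝ F]
  {μ : Measure G}

theorem norm_integral_smul_comp_sub_le_of_integral_eq_zero [CompleteSpace F] {f : G → ℝ}
    {k : G → F} {x : G} {c : ℝ} (hf : Integrable f μ) (hmean : ∫ y, f y ∂μ = 0)
    (hk : AEStronglyMeasurable (fun y => k (x - y)) μ)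
    (hkc : ∀ y ∈ Function.support f, ‖k (x - y) - k x‖ ≤ c) :
    ‖∫ y, f y • k (x - y) ∂μ‖ ≤ c * ∫ y, ‖f y‖ ∂μ := by
  have hbound : ∀ y, ‖f y • (k (x - y) - k x)‖ ≤ ‖f y‖ * c := fun y => by
    rw [norm_smul]
    by_cases hy : f y = 0
    · simp [hy]
    · exact mul_le_mul_of_nonneg_left (hkc y hy) (norm_nonneg _)
  have hdiff : Integrable (fun y => f y • (k (x - y) - k x)) μ :=
    (hf.norm.mul_const c).mono' (hf.1.smul (hk.sub aestronglyMeasurable_const))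
      (ae_of_all _ hbound)
  have hint : Integrable (fun y => f y • k (x - y)) μ := by
    simpa only [smul_sub, sub_add_cancel] using hdiff.fun_add (hf.smul_const (k x))
  have hcentre : ∫ y, f y • k (x - y) ∂μ = ∫ y, f y • (k (x - y) - k x) ∂μ := by
    simp_rw [smul_sub]
    rw [integral_sub hint (hf.smul_const _), integral_smul_const, hmean, zero_smul, sub_zero]
  rw [hcentre, mul_comm, ← integral_mul_const]
  exact norm_integral_le_of_norm_le (hf.norm.mul_const c) (ae_of_all _ hbound)

variable [MeasurableAdd G] [MeasurableNeg G] [μ.IsAddLeftInvariant] [μ.IsNegInvariant]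

theorem norm_integral_smul_comp_sub_le {f : G → ℝ} {k : G → F} {s : Set G} {M c : ℝ}
    (hf : Integrable f μ) (hfM : ∀ᵐ y ∂μ, ‖f y‖ ≤ M) (hs : MeasurableSet s)
    (hks : IntegrableOn k s μ) (hc : 0 ≤ c) (hkc : ∀ z ∉ s, ‖k z‖ ≤ c) (x : G) :
    ‖∫ y, f y • k (x - y) ∂μ‖ ≤ M * ∫ z in s, ‖k z‖ ∂μ + c * ∫ y, ‖f y‖ ∂μ := by
  have hh : Integrable (fun y => s.indicator (‖k ·‖) (x - y)) μ :=
    ((integrable_indicator_iff hs).2 hks.norm).comp_sub_left x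
  have hbound :
      ∀ᵐ y ∂μ, ‖f y • k (x - y)‖ ≤ M * s.indicator (‖k ·‖) (x - y) + c * ‖f y‖ := by
    filter_upwards [hfM] with y hy
    rw [norm_smul]
    by_cases hxy : x - y ∈ s
    · rw [indicator_of_mem hxy]
      nlinarith [norm_nonneg (k (x - y)), norm_nonneg (f y)]
    · rw [indicator_of_notMem hxy, mul_zero, zero_add, mul_comm c]
      exact mul_le_mul_of_nonneg_left (hkc _ hxy) (norm_nonneg _)
  refine (norm_integral_le_of_norm_le ((hh.const_mul M).fun_add (hf.norm.const_mul c))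
    hbound).trans_eq ?_
  rw [integral_add (hh.const_mul M) (hf.norm.const_mul c), integral_const_mul, integral_const_mul,
    integral_sub_left_eq_self (s.indicator (‖k ·‖)) μ x, integral_indicator hs]

end Convolution

section Decay

variable {E F : Type*} [NormedAddCommGroup E] [NormedSpace ℝ E] [FiniteDimensional ℝ E]
  [MeasurableSpace E] [BorelSpace E] [NormedAddCommGroup F] {μ : Measure E} [μ.IsAddHaarMeasure]

theorem memLp_two_of_norm_le_mul_one_add_norm_rpow {g : E → F} {A s : ℝ}
    (hs : (Module.finrank ℝ E : ℝ) < 2 * s) (hg : AEStronglyMeasurable g μ)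
    (hbound : ∀ x, ‖g x‖ ≤ A * (1 + ‖x‖) ^ (-s)) : MemLp g 2 μ := by
  have hmeas : AEStronglyMeasurable (fun x : E => A * (1 + ‖x‖) ^ (-s)) μ :=
    Measurable.aestronglyMeasurable (by fun_prop)
  have hsq : Integrable (fun x : E => (A * (1 + ‖x‖) ^ (-s)) ^ 2) μ := by
    refine ((integrable_one_add_norm hs).const_mul (A ^ 2)).congr (ae_of_all _ fun x => ?_)
    dsimp only
    rw [mul_pow, ← Real.rpow_mul_natCast (by positivity)]
    ring_nf
  exact ((memLp_two_iff_integrable_sq hmeas).2 hsq).of_le hg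
    (ae_of_all _ fun x => (hbound x).trans (le_abs_self _))

end Decay

lemma le_mul_one_add_rpow_neg_two {u v r C D : ℝ} (hr : 1 ≤ r) (hu : 0 ≤ u) (hC : 0 ≤ C)
    (hD : 0 ≤ D) (hvC : v ≤ C) (hvD : r ≤ u → v ≤ D / u ^ 2) :
    v ≤ (C * (1 + r) ^ 2 + 4 * D) * (1 + u) ^ (-2 : ℝ) := by
  rw [Real.rpow_neg (by positivity), Real.rpow_two, ← div_eq_mul_inv,
    le_div_iff₀ (by positivity)]
  rcases le_total u r with hur | hru
  · calc v * (1 + u) ^ 2 ≤ C * (1 + r) ^ 2 := by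
          gcongr
      _ ≤ C * (1 + r) ^ 2 + 4 * D := by linarith
  · have hu0 : 0 < u := by linarith
    have hv : v * u ^ 2 ≤ D := (le_div_iff₀ (by positivity)).1 (hvD hru)
    have hu2 : (1 + u) ^ 2 ≤ 4 * u ^ 2 := by nlinarith
    have hCr : 0 ≤ C * (1 + r) ^ 2 := by positivity
    rcases le_total v 0 with hv0 | hv0
    · nlinarith
    · nlinarith [mul_le_mul_of_nonneg_left hu2 hv0]

lemma perp_apply_zero (x : E2) : perp x 0 = -x 1 := rfl

lemma perp_apply_one (x : E2) : perp x 1 = x 0 := rfl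

def perpₗᵢ : E2 →ₗᵢ[ℝ] E2 where
  toFun := perp
  map_add' x y := by ext i; fin_cases i <;> simp [perp_apply_zero, perp_apply_one]; ring
  map_smul' c x := by ext i; fin_cases i <;> simp [perp_apply_zero, perp_apply_one]
  norm_map' := norm_perp

@[simp] lemma coe_perpₗᵢ : ⇑perpₗᵢ = perp := rfl

lemma biotSavart_eq_smul_perp_inversion (x : E2) :
    biotSavart x = (2 * Real.pi)⁻¹ • perpₗᵢ ((1 / ‖x‖) ^ 2 • x) := by
  rw [map_smul, smul_smul, coe_perpₗᵢ, biotSavart]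
  congr 1
  ring

lemma norm_biotSavart (x : E2) : ‖biotSavart x‖ = (2 * Real.pi)⁻¹ * ‖x‖⁻¹ := by
  rw [biotSavart_eq_smul_perp_inversion, norm_smul, LinearIsometry.norm_map, norm_smul,
    Real.norm_of_nonneg (by positivity), Real.norm_of_nonneg (by positivity)]
  rcases eq_or_ne x 0 with rfl | hx
  · simp
  · have := norm_pos_iff.2 hx
    field_simp

lemma norm_biotSavart_sub {a b : E2} (ha : a ≠ 0) (hb : b ≠ 0) :
    ‖biotSavart a - biotSavart b‖ = ‖a - b‖ / (2 * Real.pi * (‖a‖ * ‖b‖)) := by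
  rw [biotSavart_eq_smul_perp_inversion, biotSavart_eq_smul_perp_inversion, ← smul_sub, ← map_sub,
    norm_smul, LinearIsometry.norm_map, ← dist_eq_norm, dist_div_norm_sq_smul ha hb, dist_eq_norm,
    Real.norm_eq_abs, abs_inv, abs_of_pos Real.two_pi_pos]
  field_simp

lemma norm_biotSavart_sub_le_of_le {R : ℝ} {x y : E2} (hR : 0 < R) (hy : ‖y‖ ≤ R)
    (hx : 2 * R ≤ ‖x‖) : ‖biotSavart (x - y) - biotSavart x‖ ≤ R / (Real.pi * ‖x‖ ^ 2) := by
  have hx0 : 0 < ‖x‖ := by linarith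
  have hxy : ‖x‖ / 2 ≤ ‖x - y‖ := by linarith [norm_sub_norm_le x y]
  have hxy0 : 0 < ‖x - y‖ := by linarith
  rw [norm_biotSavart_sub (norm_pos_iff.1 hxy0) (norm_pos_iff.1 hx0), sub_sub_cancel_left,
    norm_neg, div_le_div_iff₀ (by positivity) (by positivity)]
  calc ‖y‖ * (Real.pi * ‖x‖ ^ 2) ≤ R * (2 * Real.pi * (‖x‖ / 2 * ‖x‖)) := by
        rw [show 2 * Real.pi * (‖x‖ / 2 * ‖x‖) = Real.pi * ‖x‖ ^ 2 by ring]
        gcongr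
    _ ≤ R * (2 * Real.pi * (‖x - y‖ * ‖x‖)) := by gcongr

lemma integrableOn_biotSavart_ball : IntegrableOn biotSavart (ball 0 1) volume := by
  refine integrableOn_ball_of_norm_le_rpow (C := (2 * Real.pi)⁻¹) (α := 1) (by simp) (by simp)
    (ae_of_all _ fun x => ?_) measurable_biotSavart.aestronglyMeasurable
  rw [norm_biotSavart, Real.rpow_neg_one]

lemma norm_biotSavart_le_of_one_le {x : E2} (hx : 1 ≤ ‖x‖) : ‖biotSavart x‖ ≤ (2 * Real.pi)⁻¹ := by
  rw [norm_biotSavart]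
  exact mul_le_of_le_one_right (by positivity) (inv_le_one_of_one_le₀ hx)

lemma aestronglyMeasurable_KConv {ω : E2 → ℝ} (hω : AEStronglyMeasurable ω volume) :
    AEStronglyMeasurable (KConv ω) volume :=
  (hω.comp_snd.fun_smul (measurable_biotSavart.comp
    (measurable_fst.sub measurable_snd)).aestronglyMeasurable).integral_prod_right'

lemma norm_KConv_le {ω : E2 → ℝ} {M : ℝ} (hω : Integrable ω) (hM : ∀ᵐ y, ‖ω y‖ ≤ M) (x : E2) :
    ‖KConv ω x‖ ≤ M * (∫ z in ball 0 1, ‖biotSavart z‖) + (2 * Real.pi)⁻¹ * ∫ y, ‖ω y‖ :=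
  norm_integral_smul_comp_sub_le hω hM measurableSet_ball integrableOn_biotSavart_ball
    (by positivity) (fun z hz => norm_biotSavart_le_of_one_le (by simpa using hz)) x

lemma norm_KConv_le_of_integral_eq_zero {ω : E2 → ℝ} {R : ℝ} (hω : Integrable ω)
    (hmean : ∫ y, ω y = 0) (hR : 0 < R) (hsupp : ∀ y ∈ Function.support ω, ‖y‖ ≤ R) {x : E2}
    (hx : 2 * R ≤ ‖x‖) : ‖KConv ω x‖ ≤ R / (Real.pi * ‖x‖ ^ 2) * ∫ y, ‖ω y‖ :=
  norm_integral_smul_comp_sub_le_of_integral_eq_zero hω hmean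
    (measurable_biotSavart.comp (measurable_const.sub measurable_id)).aestronglyMeasurable
    fun y hy => norm_biotSavart_sub_le_of_le hR (hsupp y hy) hx

/-- **Square-integrability of the velocity of a mean-zero vorticity.** If `ω ∈ L¹ ∩ L∞(ℝ²)` is
compactly supported with `∫ ω = 0`, then `K ∗ ω ∈ L²(ℝ²; ℝ²)`. -/
theorem velocity_L2_of_mean_zero (ω : E2 → ℝ)
    (h1 : MemLp ω 1 (volume : Measure E2)) (htop : MemLp ω ⊤ (volume : Measure E2))
    (hsupp : HasCompactSupport ω) (hmean : ∫ x, ω x = 0) :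
    MemLp (KConv ω) 2 (volume : Measure E2) := by
  have hω : Integrable ω := memLp_one_iff_integrable.1 h1
  obtain ⟨R, hR1, hR⟩ : ∃ R, 1 ≤ R ∧ ∀ y ∈ Function.support ω, ‖y‖ ≤ R := by
    obtain ⟨C, hC⟩ := hsupp.isBounded.exists_norm_le
    exact ⟨max C 1, le_max_right _ _,
      fun y hy => (hC y (subset_tsupport _ hy)).trans (le_max_left _ _)⟩
  have hbounded := norm_KConv_le hω (ae_le_lpNorm_exponent_top htop)
  have hdecay (x : E2) (hx : 2 * R ≤ ‖x‖) :
      ‖KConv ω x‖ ≤ (R / Real.pi * ∫ y, ‖ω y‖) / ‖x‖ ^ 2 := by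
    calc ‖KConv ω x‖ ≤ R / (Real.pi * ‖x‖ ^ 2) * ∫ y, ‖ω y‖ :=
          norm_KConv_le_of_integral_eq_zero hω hmean (by linarith) hR hx
      _ = (R / Real.pi * ∫ y, ‖ω y‖) / ‖x‖ ^ 2 := by ring
  have hM : 0 ≤ lpNorm ω ⊤ volume := lpNorm_nonneg
  exact memLp_two_of_norm_le_mul_one_add_norm_rpow (s := 2) (by norm_num)
    (aestronglyMeasurable_KConv hω.aestronglyMeasurable) fun x => le_mul_one_add_rpow_neg_two (by linarith)
      (norm_nonneg x) (by positivity) (by positivity) (hbounded x) (hdecay x)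

end
end
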